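/- arXiv:2203.04010 — 2 statements merged into one kernel-verified Lean document; each statement's English description precedes it below -/
import Mathlib

section
/- Let λ, μ ∈ ℝ with μ > 0 and 2μ + 3λ > 0, let Q(G) := (λ/2)(tr G)² + μ|sym G|² on 3×3 real matrices, and define Q₂(B) := inf_{d∈ℝ³} Q(ι(B) + sym(d⊗e₃)) for B ∈ ℝ^{2×2}_sym. Then for every U ∈ ℝ^{2×2}_sym, the infimum over pairs A, M ∈ ℝ^{2×2}_sym of ∫_{−1/2}^{1/2} Q₂( t·A + M + 𝟙(t>0)·(1/2)U ) dt is attained and equals (1/64)·( (μλ/(λ+2μ))(tr U)² + μ|U|² ). (Isotropic representation of the residual energy E_res.) -/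
open MeasureTheory Matrix Filter Topology

noncomputable section

/-- 2×2 real matrices. -/
abbrev M2 : Type := Matrix (Fin 2) (Fin 2) ℝ
/-- 3×3 real matrices. -/
abbrev M3 : Type := Matrix (Fin 3) (Fin 3) ℝ

/-- squared Frobenius norm of a 2×2 matrix -/
def frobSq2 (A : M2) : ℝ := ∑ i, ∑ j, (A i j) ^ 2

/-- squared Frobenius norm of a 3×3 matrix -/
def frobSq3 (A : M3) : ℝ := ∑ i, ∑ j, (A i j) ^ 2

/-- symmetric part of a matrix: `sym G = (G + Gᵀ)/2` -/
def symPart (G : M3) : M3 := (1 / 2 : ℝ) • (G + Gᵀ)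

/-- `ι A` : the 3×3 matrix with upper-left 2×2 block `A` and zeros elsewhere -/
def iota (A : M2) : M3 :=
  Matrix.of fun i j =>
    if hi : (i : ℕ) < 2 then (if hj : (j : ℕ) < 2 then A ⟨i, hi⟩ ⟨j, hj⟩ else 0) else 0

/-- `d ⊗ e₃` : the 3×3 matrix whose third column is `d` and whose other entries vanish -/
def tensorE3 (d : Fin 3 → ℝ) : M3 :=
  Matrix.of fun i j => if j = (2 : Fin 3) then d i else 0

/-
Minimising over the transverse vector `d` by completing the square in its third component turns
`Q₂` into the quadratic form `q(B) = a (tr B)² + μ|B|²` on symmetric matrices, with `a = μλ/(λ+2μ)`; it is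
positive semidefinite since `μ + 2a = μ(2μ+3λ)/(λ+2μ) > 0`. For any quadratic form `q`, splitting
the integral at `t = 0` and completing squares in `A` and `M` gives
`∫ q(tA + M + 𝟙(t>0) W) dt = q(A + 3/2 W)/12 + q(M + 1/2 W) + q(W)/16`,
so with `W = U/2` the infimum is `q(U)/64`, attained at `A = -3/4 U`, `M = -1/4 U`.
-/

open Set

namespace QuadraticMap

variable {V : Type*} [AddCommGroup V] [Module ℝ V] (q : QuadraticMap ℝ V ℝ)

lemma apply_smul_add (t : ℝ) (A M : V) :
    q (t • A + M) = q A * t ^ 2 + polar q A M * t + q M := by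
  rw [QuadraticMap.map_add q, QuadraticMap.map_smul, polar_smul_left, smul_eq_mul, smul_eq_mul]
  ring

lemma continuous_apply_smul_add (A M : V) : Continuous fun t : ℝ => q (t • A + M) := by
  simp_rw [apply_smul_add]
  fun_prop

lemma intervalIntegral_apply_smul_add (A M : V) (a b : ℝ) :
    ∫ t in a..b, q (t • A + M) =
      q A * ((b ^ 3 - a ^ 3) / 3) + polar q A M * ((b ^ 2 - a ^ 2) / 2) + q M * (b - a) := by
  have hint {f : ℝ → ℝ} (hf : Continuous f) : IntervalIntegrable f volume a b :=
    hf.intervalIntegrable a b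
  simp_rw [apply_smul_add]
  rw [intervalIntegral.integral_add (hint (by fun_prop)) (hint (by fun_prop)),
    intervalIntegral.integral_add (hint (by fun_prop)) (hint (by fun_prop)),
    intervalIntegral.integral_const_mul, intervalIntegral.integral_const_mul, integral_pow,
    integral_id, intervalIntegral.integral_const, smul_eq_mul]
  ring

lemma integral_Ioo_apply_smul_add_step (A M W : V) :
    ∫ t in Ioo (-(1 : ℝ) / 2) (1 / 2), q (t • A + M + (if 0 < t then (1 : ℝ) else 0) • W) =
      q (A + (3 / 2 : ℝ) • W) / 12 + q (M + (1 / 2 : ℝ) • W) + q W / 16 := by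
  set f := fun t : ℝ => q (t • A + M + (if 0 < t then (1 : ℝ) else 0) • W)
  have hneg : EqOn f (fun t => q (t • A + M)) (uIoc (-(1 : ℝ) / 2) 0) := by
    intro t ht
    rw [uIoc_of_le (by norm_num)] at ht
    simp [f, not_lt.mpr ht.2]
  have hpos : EqOn f (fun t => q (t • A + (M + W))) (uIoc 0 (1 / 2 : ℝ)) := by
    intro t ht
    rw [uIoc_of_le (by norm_num)] at ht
    simp [f, ht.1, add_assoc]
  rw [← integral_Ioc_eq_integral_Ioo, ← intervalIntegral.integral_of_le (by norm_num),
    ← intervalIntegral.integral_add_adjacent_intervals (b := 0)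
      (((continuous_apply_smul_add q A M).intervalIntegrable _ _).congr hneg.symm)
      (((continuous_apply_smul_add q A _).intervalIntegrable _ _).congr hpos.symm),
    intervalIntegral.integral_congr_ae (ae_of_all _ hneg),
    intervalIntegral.integral_congr_ae (ae_of_all _ hpos),
    intervalIntegral_apply_smul_add, intervalIntegral_apply_smul_add, polar_add_right,
    QuadraticMap.map_add q A, QuadraticMap.map_add q M, QuadraticMap.map_add q M,
    QuadraticMap.map_smul, QuadraticMap.map_smul, polar_smul_right, polar_smul_right]
  simp only [smul_eq_mul]
  ring

lemma isLeast_range_integral_Ioo_apply_smul_add_step (hq : ∀ x, 0 ≤ q x) (P : V → Prop) (W : V)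
    (hA : P ((-(3 / 2) : ℝ) • W)) (hM : P ((-(1 / 2) : ℝ) • W)) :
    IsLeast (range fun p : {x // P x} × {x // P x} =>
        ∫ t in Ioo (-(1 : ℝ) / 2) (1 / 2),
          q (t • p.1.val + p.2.val + (if 0 < t then (1 : ℝ) else 0) • W))
      (q W / 16) := by
  simp_rw [integral_Ioo_apply_smul_add_step]
  refine ⟨⟨(⟨_, hA⟩, ⟨_, hM⟩), ?_⟩, ?_⟩
  · simp only [← add_smul]
    norm_num
  · rintro _ ⟨⟨A, M⟩, rfl⟩
    linarith [hq (A.val + (3 / 2 : ℝ) • W), hq (M.val + (1 / 2 : ℝ) • W)]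

end QuadraticMap

def isotropicForm (a mu : ℝ) : QuadraticMap ℝ M2 ℝ :=
  a • QuadraticMap.sq.comp (Matrix.traceLinearMap (Fin 2) ℝ ℝ) +
    mu • ∑ i, ∑ j, QuadraticMap.sq.comp (Matrix.entryLinearMap ℝ ℝ i j)

lemma isotropicForm_apply (a mu : ℝ) (B : M2) :
    isotropicForm a mu B = a * trace B ^ 2 + mu * frobSq2 B := by
  simp only [isotropicForm, frobSq2, Fin.sum_univ_two, _root_.add_apply, _root_.smul_apply,
    QuadraticMap.comp_apply, traceLinearMap_apply, QuadraticMap.sq_apply, smul_eq_mul,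
    entryLinearMap_apply, sq]

lemma isotropicForm_nonneg {a mu : ℝ} (hmu : 0 ≤ mu) (ha : 0 ≤ mu + 2 * a) (B : M2) :
    0 ≤ isotropicForm a mu B := by
  rw [isotropicForm_apply, frobSq2, trace_fin_two]
  simp only [Fin.sum_univ_two]
  nlinarith [mul_nonneg ha (sq_nonneg (B 0 0 + B 1 1)), mul_nonneg hmu (sq_nonneg (B 0 0 - B 1 1)),
    mul_nonneg hmu (sq_nonneg (B 0 1)), mul_nonneg hmu (sq_nonneg (B 1 0))]

lemma iota_add_symPart_tensorE3 (B : M2) (d : Fin 3 → ℝ) :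
    iota B + symPart (tensorE3 d) =
      !![B 0 0, B 0 1, d 0 / 2; B 1 0, B 1 1, d 1 / 2; d 0 / 2, d 1 / 2, d 2] := by
  ext i j
  fin_cases i <;> fin_cases j <;> simp [iota, symPart, tensorE3] <;> ring

lemma symPart_of_isSymm {G : M3} (hG : G.IsSymm) : symPart G = G := by
  rw [symPart, hG.eq, ← two_smul ℝ, smul_smul]
  norm_num

lemma trace_iota_add_symPart_tensorE3 (B : M2) (d : Fin 3 → ℝ) :
    trace (iota B + symPart (tensorE3 d)) = trace B + d 2 := by
  rw [iota_add_symPart_tensorE3, trace_fin_three, trace_fin_two]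
  simp

lemma frobSq3_symPart_iota_add_symPart_tensorE3 {B : M2} (hB : B.IsSymm) (d : Fin 3 → ℝ) :
    frobSq3 (symPart (iota B + symPart (tensorE3 d))) =
      frobSq2 B + d 0 ^ 2 / 2 + d 1 ^ 2 / 2 + d 2 ^ 2 := by
  have hsymm : (iota B + symPart (tensorE3 d)).IsSymm := by
    rw [iota_add_symPart_tensorE3]
    ext i j
    fin_cases i <;> fin_cases j <;> simp [hB.apply 0 1]
  rw [symPart_of_isSymm hsymm, iota_add_symPart_tensorE3]
  simp only [frobSq3, frobSq2, Fin.sum_univ_three, Fin.sum_univ_two, of_apply, cons_val',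
    cons_val_fin_one, cons_val_zero, cons_val_one, cons_val]
  ring

lemma iInf_relaxation_eq {lam mu : ℝ} (hmu : 0 < mu) (hK : 0 < lam + 2 * mu) (s F : ℝ) :
    ⨅ d : Fin 3 → ℝ, (lam / 2 * (s + d 2) ^ 2 + mu * (F + d 0 ^ 2 / 2 + d 1 ^ 2 / 2 + d 2 ^ 2)) =
      mu * lam / (lam + 2 * mu) * s ^ 2 + mu * F := by
  refine IsGLB.ciInf_eq (IsLeast.isGLB ⟨⟨![0, 0, -lam * s / (lam + 2 * mu)], ?_⟩, ?_⟩)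
  · simp only [Matrix.cons_val]
    field_simp
    ring
  · rintro _ ⟨d, rfl⟩
    have h : mu * lam / (lam + 2 * mu) * (lam + 2 * mu) = mu * lam := div_mul_cancel₀ _ hK.ne'
    nlinarith [sq_nonneg (lam * s + (lam + 2 * mu) * d 2), mul_pos hmu hK,
      mul_nonneg (mul_nonneg hmu.le hK.le) (sq_nonneg (d 0)),
      mul_nonneg (mul_nonneg hmu.le hK.le) (sq_nonneg (d 1))]

lemma iInf_energy_iota_add_symPart_tensorE3 {lam mu : ℝ} (hmu : 0 < mu) (hK : 0 < lam + 2 * mu)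
    {B : M2} (hB : B.IsSymm) :
    ⨅ d, (lam / 2 * trace (iota B + symPart (tensorE3 d)) ^ 2 +
        mu * frobSq3 (symPart (iota B + symPart (tensorE3 d)))) =
      isotropicForm (mu * lam / (lam + 2 * mu)) mu B := by
  simp_rw [trace_iota_add_symPart_tensorE3, frobSq3_symPart_iota_add_symPart_tensorE3 hB,
    iInf_relaxation_eq hmu hK, isotropicForm_apply]

/-- isotropic representation of the residual energy `E_res`:
with `Q(G) = (λ/2)(tr G)² + μ|sym G|²` and `Q₂(B) = inf_d Q(ι(B)+sym(d⊗e₃))`,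
for every symmetric `U` the infimum over symmetric pairs `(A,M)` of
`∫_{−1/2}^{1/2} Q₂(t·A+M+𝟙(t>0)·(1/2)U) dt` is attained and equals
`(1/64)((μλ/(λ+2μ))(tr U)² + μ|U|²)`. -/
theorem statement6 (lam mu : ℝ) (hmu : 0 < mu) (hbulk : 0 < 2 * mu + 3 * lam)
    (Q : M3 → ℝ)
    (hQ : ∀ G, Q G = lam / 2 * (Matrix.trace G) ^ 2 + mu * frobSq3 (symPart G))
    (Q2 : M2 → ℝ)
    (hQ2 : ∀ B, Q2 B = ⨅ d : Fin 3 → ℝ, Q (iota B + symPart (tensorE3 d)))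
    (U : M2) (hU : U.IsSymm) :
    IsLeast
      (Set.range fun p : {M : M2 // M.IsSymm} × {M : M2 // M.IsSymm} =>
        ∫ t in Set.Ioo (-(1 : ℝ) / 2) (1 / 2),
          Q2 (t • p.1.val + p.2.val + (if 0 < t then (1 : ℝ) else 0) • ((1 / 2 : ℝ) • U)))
      ((1 / 64) * (mu * lam / (lam + 2 * mu) * (Matrix.trace U) ^ 2 + mu * frobSq2 U)) := by
  have hK : 0 < lam + 2 * mu := by linarith
  set q := isotropicForm (mu * lam / (lam + 2 * mu)) mu
  have hQ2_eq (B : M2) (hB : B.IsSymm) : Q2 B = q B := by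
    simp_rw [hQ2, hQ]
    exact iInf_energy_iota_add_symPart_tensorE3 hmu hK hB
  have hq : ∀ B, 0 ≤ q B := by
    refine isotropicForm_nonneg hmu.le ?_
    have h : mu + 2 * (mu * lam / (lam + 2 * mu)) = mu * (2 * mu + 3 * lam) / (lam + 2 * mu) := by
      rw [eq_div_iff hK.ne', add_mul, mul_assoc 2, div_mul_cancel₀ _ hK.ne']
      ring
    rw [h]
    positivity
  have hW := hU.smul (1 / 2 : ℝ)
  convert q.isLeast_range_integral_Ioo_apply_smul_add_step hq Matrix.IsSymm _
    (hW.smul _) (hW.smul _) using 3 with p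
  · exact integral_congr_ae (ae_of_all _ fun t =>
      hQ2_eq _ (((p.1.2.smul t).add p.2.2).add (hW.smul _)))
  · rw [QuadraticMap.map_smul, isotropicForm_apply, smul_eq_mul]
    ring
end
end

section
/- Let Ω ⊆ ℝ³ be a measurable set, let q > 4 and set p := 2q/(q+4), so that 1 < p < 2 and 1/p = 1/2 + 2/q. Let G, F : Ω → ℝ^{3×3} be measurable with det F > 0 almost everywhere on Ω. Then (∫_Ω |G|^p dx)^{1/p} ≤ (∫_Ω |G F^{−1}|² det F dx)^{1/2} · (∫_Ω |F|^q dx)^{1/q} · (∫_Ω (det F)^{−q/2} dx)^{1/q}, where all integrals are interpreted as values in [0, ∞]. -/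
open MeasureTheory Matrix Filter Topology

noncomputable section

/-- Frobenius norm of a 3×3 matrix -/
def frobNorm3 (A : M3) : ℝ := Real.sqrt (frobSq3 A)

lemma frobSq3_nonneg (A : M3) : 0 ≤ frobSq3 A := by
  unfold frobSq3; positivity

lemma frobNorm3_nonneg (A : M3) : 0 ≤ frobNorm3 A := Real.sqrt_nonneg _

lemma frobNorm3_sq (A : M3) : frobNorm3 A ^ 2 = frobSq3 A :=
  Real.sq_sqrt (frobSq3_nonneg A)

lemma frobSq3_mul_le (A B : M3) : frobSq3 (A * B) ≤ frobSq3 A * frobSq3 B := by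
  have h : ∀ i j : Fin 3, (A * B) i j ^ 2 ≤ (∑ k, A i k ^ 2) * (∑ k, B k j ^ 2) := by
    intro i j
    simpa [Matrix.mul_apply] using
      Finset.sum_mul_sq_le_sq_mul_sq Finset.univ (fun k => A i k) (fun k => B k j)
  calc frobSq3 (A * B) ≤ ∑ i : Fin 3, ∑ j : Fin 3, (∑ k, A i k ^ 2) * (∑ k, B k j ^ 2) := by
        refine Finset.sum_le_sum fun i _ => Finset.sum_le_sum fun j _ => h i j
    _ = (∑ i : Fin 3, ∑ k, A i k ^ 2) * (∑ j : Fin 3, ∑ k, B k j ^ 2) :=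
        (Finset.sum_mul_sum _ _ _ _).symm
    _ = frobSq3 A * frobSq3 B := by
        unfold frobSq3; congr 1; exact Finset.sum_comm

lemma frobNorm3_mul_le (A B : M3) : frobNorm3 (A * B) ≤ frobNorm3 A * frobNorm3 B := by
  rw [frobNorm3, frobNorm3, frobNorm3, ← Real.sqrt_mul (frobSq3_nonneg A)]
  exact Real.sqrt_le_sqrt (frobSq3_mul_le A B)


lemma real_key {p q a b nF d gN : ℝ} (hq0 : 0 < q) (hp0 : 0 < p)
    (ha : a = b ^ 2) (hb : 0 ≤ b) (hnF : 0 ≤ nF) (hd : 0 < d) (hg : 0 ≤ gN)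
    (hG : gN ≤ b * nF) :
    gN ^ p ≤ (a * d) ^ (p/2) * ((nF ^ q) ^ (p/q) * (d ^ (-(q/2))) ^ (p/q)) := by
  have h1 : (a * d) ^ (p/2) = b ^ p * d ^ (p/2) := by
    rw [ha, Real.mul_rpow (sq_nonneg b) hd.le, ← Real.rpow_natCast b 2, ← Real.rpow_mul hb,
      show ((2:ℕ):ℝ) * (p/2) = p by push_cast; ring]
  have h2 : (nF ^ q) ^ (p/q) = nF ^ p := by
    rw [← Real.rpow_mul hnF]
    congr 1
    field_simp
  have h3 : (d ^ (-(q/2))) ^ (p/q) = d ^ (-(p/2)) := by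
    rw [← Real.rpow_mul hd.le]
    congr 1
    field_simp
  have h4 : d ^ (p/2) * d ^ (-(p/2)) = 1 := by
    rw [← Real.rpow_add hd]; norm_num
  rw [h1, h2, h3]
  calc gN ^ p ≤ (b * nF) ^ p := Real.rpow_le_rpow hg hG hp0.le
    _ = b ^ p * nF ^ p := Real.mul_rpow hb hnF
    _ = b ^ p * d ^ (p/2) * (nF ^ p * d ^ (-(p/2))) := by
        rw [show b ^ p * d ^ (p/2) * (nF ^ p * d ^ (-(p/2)))
            = b ^ p * nF ^ p * (d ^ (p/2) * d ^ (-(p/2))) by ring, h4, mul_one]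

/-- triple Hölder-type inequality: for `q > 4`, `p = 2q/(q+4)`,
measurable `G, F` with `det F > 0` a.e. on `Ω`,
`(∫_Ω |G|ᵖ)^{1/p} ≤ (∫_Ω |G F⁻¹|² det F)^{1/2} (∫_Ω |F|^q)^{1/q} (∫_Ω (det F)^{−q/2})^{1/q}`,
all integrals valued in `[0,∞]`. -/
theorem statement15 (Ω : Set (Fin 3 → ℝ)) (hΩ : MeasurableSet Ω)
    (q : ℝ) (hq : 4 < q) (p : ℝ) (hp : p = 2 * q / (q + 4))
    (G F : (Fin 3 → ℝ) → M3)
    (hGmeas : ∀ i j : Fin 3, Measurable fun x => G x i j)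
    (hFmeas : ∀ i j : Fin 3, Measurable fun x => F x i j)
    (hdet : ∀ᵐ x ∂(volume.restrict Ω), 0 < (F x).det) :
    (∫⁻ x in Ω, ENNReal.ofReal (frobNorm3 (G x) ^ p)) ^ (1 / p)
      ≤ (∫⁻ x in Ω, ENNReal.ofReal (frobSq3 (G x * (F x)⁻¹) * (F x).det)) ^ ((1 : ℝ) / 2)
        * (∫⁻ x in Ω, ENNReal.ofReal (frobNorm3 (F x) ^ q)) ^ (1 / q)
        * (∫⁻ x in Ω, ENNReal.ofReal ((F x).det ^ (-(q / 2)))) ^ (1 / q) := by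

  have hq0 : (0:ℝ) < q := by linarith
  have hp0 : 0 < p := by rw [hp]; positivity
  -- measurability
  have hdetm : Measurable fun x => (F x).det := by
    simp only [Matrix.det_apply']
    refine Finset.measurable_sum _ fun σ _ => measurable_const.mul ?_
    exact Finset.measurable_prod _ fun k _ => hFmeas (σ k) k
  have hadjm : ∀ i j : Fin 3, Measurable fun x => (F x).adjugate i j := by
    intro i j
    simp only [Matrix.adjugate_apply, Matrix.det_apply']
    refine Finset.measurable_sum _ fun σ _ => measurable_const.mul ?_
    refine Finset.measurable_prod _ fun k _ => ?_
    simp only [Matrix.updateRow_apply]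
    by_cases h : σ k = j
    · simp only [if_pos h]; exact measurable_const
    · simp only [if_neg h]; exact hFmeas (σ k) k
  have hinvm : ∀ i j : Fin 3, Measurable fun x => (F x)⁻¹ i j := by
    intro i j
    have heq : (fun x => (F x)⁻¹ i j) = fun x => ((F x).det)⁻¹ * (F x).adjugate i j := by
      funext x
      rw [Matrix.inv_def, Matrix.smul_apply, Ring.inverse_eq_inv, smul_eq_mul]
    rw [heq]
    exact hdetm.inv.mul (hadjm i j)
  have hsq1 : Measurable fun x => frobSq3 (G x * (F x)⁻¹) := by
    unfold frobSq3
    refine Finset.measurable_sum _ fun i _ => Finset.measurable_sum _ fun j _ => ?_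
    simp only [Matrix.mul_apply]
    exact (Finset.measurable_sum _ fun k _ => (hGmeas i k).mul (hinvm k j)).pow_const 2
  have hsqF : Measurable fun x => frobSq3 (F x) := by
    unfold frobSq3
    exact Finset.measurable_sum _ fun i _ =>
      Finset.measurable_sum _ fun j _ => (hFmeas i j).pow_const 2
  have hnF : Measurable fun x => frobNorm3 (F x) :=
    Real.continuous_sqrt.measurable.comp hsqF
  set μ := volume.restrict Ω with hμ
  set f : Fin 3 → (Fin 3 → ℝ) → ENNReal := ![
    fun x => ENNReal.ofReal (frobSq3 (G x * (F x)⁻¹) * (F x).det),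
    fun x => ENNReal.ofReal (frobNorm3 (F x) ^ q),
    fun x => ENNReal.ofReal ((F x).det ^ (-(q / 2)))] with hf
  set e : Fin 3 → ℝ := ![p / 2, p / q, p / q] with he
  have hfm : ∀ i ∈ Finset.univ, AEMeasurable (f i) μ := by
    intro i _
    fin_cases i
    · exact ((hsq1.mul hdetm).ennreal_ofReal).aemeasurable
    · refine (((Real.continuous_rpow_const hq0.le).measurable.comp hnF).ennreal_ofReal).aemeasurable
    · have hm : Measurable fun x =>
          ENNReal.ofReal (Real.exp (Real.log ((F x).det) * (-(q / 2)))) :=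
        ((Real.measurable_log.comp hdetm).mul_const _).exp.ennreal_ofReal
      refine hm.aemeasurable.congr ?_
      filter_upwards [hdet] with x hx
      show ENNReal.ofReal _ = ENNReal.ofReal ((F x).det ^ (-(q / 2)))
      rw [Real.rpow_def_of_pos hx]
  have hesum : ∑ i, e i = 1 := by
    rw [he, Fin.sum_univ_three]
    simp only [Matrix.cons_val_zero, Matrix.cons_val_one, Matrix.head_cons,
      Matrix.cons_val_two, Matrix.tail_cons]
    rw [hp]
    field_simp
    ring
  have hepos : ∀ i ∈ Finset.univ, 0 ≤ e i := by
    intro i _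
    fin_cases i
    · exact div_nonneg hp0.le (by norm_num)
    · exact div_nonneg hp0.le hq0.le
    · exact div_nonneg hp0.le hq0.le
  -- pointwise inequality
  have hpt : ∀ᵐ x ∂μ, ENNReal.ofReal (frobNorm3 (G x) ^ p) ≤ ∏ i, f i x ^ e i := by
    filter_upwards [hdet] with x hx
    have hdne : IsUnit (F x).det := isUnit_iff_ne_zero.mpr hx.ne'
    have ha : 0 ≤ frobSq3 (G x * (F x)⁻¹) := frobSq3_nonneg _
    have hcancel : G x * (F x)⁻¹ * F x = G x :=
      Matrix.nonsing_inv_mul_cancel_right (F x) (G x) hdne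
    have hG : frobNorm3 (G x) ≤ frobNorm3 (G x * (F x)⁻¹) * frobNorm3 (F x) := by
      calc frobNorm3 (G x) = frobNorm3 (G x * (F x)⁻¹ * F x) := by rw [hcancel]
        _ ≤ _ := frobNorm3_mul_le _ _
    have key := real_key hq0 hp0 (frobNorm3_sq (G x * (F x)⁻¹)).symm
      (frobNorm3_nonneg _) (frobNorm3_nonneg _) hx (frobNorm3_nonneg _) hG
    have hA : (0:ℝ) ≤ (frobSq3 (G x * (F x)⁻¹) * (F x).det) ^ (p/2) :=
      Real.rpow_nonneg (mul_nonneg ha hx.le) _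
    have hB : (0:ℝ) ≤ (frobNorm3 (F x) ^ q) ^ (p/q) :=
      Real.rpow_nonneg (Real.rpow_nonneg (frobNorm3_nonneg _) _) _
    have hrw : ∏ i, f i x ^ e i
        = ENNReal.ofReal ((frobSq3 (G x * (F x)⁻¹) * (F x).det) ^ (p/2)
            * ((frobNorm3 (F x) ^ q) ^ (p/q) * ((F x).det ^ (-(q/2))) ^ (p/q))) := by
      rw [Fin.prod_univ_three]
      simp only [f, e, Matrix.cons_val_zero, Matrix.cons_val_one, Matrix.head_cons,
        Matrix.cons_val_two, Matrix.tail_cons]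
      rw [ENNReal.ofReal_rpow_of_nonneg (mul_nonneg ha hx.le) (div_nonneg hp0.le (by norm_num)),
        ENNReal.ofReal_rpow_of_nonneg (Real.rpow_nonneg (frobNorm3_nonneg _) _)
          (div_nonneg hp0.le hq0.le),
        ENNReal.ofReal_rpow_of_nonneg (Real.rpow_nonneg hx.le _) (div_nonneg hp0.le hq0.le),
        mul_assoc, ← ENNReal.ofReal_mul hB, ← ENNReal.ofReal_mul hA]
    rw [hrw]
    exact ENNReal.ofReal_le_ofReal key
  have hmain : ∫⁻ x, ENNReal.ofReal (frobNorm3 (G x) ^ p) ∂μ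
      ≤ ∏ i, (∫⁻ x, f i x ∂μ) ^ e i :=
    (lintegral_mono_ae hpt).trans (ENNReal.lintegral_prod_norm_pow_le _ hfm hesum hepos)
  have hfinal := ENNReal.rpow_le_rpow hmain (by positivity : (0:ℝ) ≤ 1/p)
  refine le_trans hfinal ?_
  rw [Fin.prod_univ_three]
  simp only [f, e, Matrix.cons_val_zero, Matrix.cons_val_one, Matrix.head_cons,
    Matrix.cons_val_two, Matrix.tail_cons]
  rw [ENNReal.mul_rpow_of_nonneg _ _ (by positivity : (0:ℝ) ≤ 1/p),
    ENNReal.mul_rpow_of_nonneg _ _ (by positivity : (0:ℝ) ≤ 1/p),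
    ← ENNReal.rpow_mul, ← ENNReal.rpow_mul, ← ENNReal.rpow_mul]
  have e1 : p/2 * (1/p) = 1/2 := by field_simp
  have e2 : p/q * (1/p) = 1/q := by field_simp
  rw [e1, e2]
end
end
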